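/- The scalar sequence (‖x^k‖₁), where (x^k) is generated by the BP-MAP algorithm, converges to r̄, the optimal value of the basis pursuit problem. -/

import Mathlib

open Filter Topology

/-- The ℓ¹-norm on ℝⁿ. -/
noncomputable def norm1 {n : ℕ} (x : EuclideanSpace ℝ (Fin n)) : ℝ := ∑ i, |x i|

lemma norm1_nonneg {n : ℕ} (x : EuclideanSpace ℝ (Fin n)) : 0 ≤ norm1 x :=
  Finset.sum_nonneg fun _ _ => abs_nonneg _

lemma norm_le_norm1 {n : ℕ} (x : EuclideanSpace ℝ (Fin n)) : ‖x‖ ≤ norm1 x := by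
  rw [EuclideanSpace.norm_eq]
  have h : ∑ i, ‖x i‖ ^ 2 ≤ (∑ i, ‖x i‖) ^ 2 :=
    Finset.sum_sq_le_sq_sum_of_nonneg fun _ _ => norm_nonneg _
  calc Real.sqrt (∑ i, ‖x i‖ ^ 2) ≤ Real.sqrt ((∑ i, ‖x i‖) ^ 2) := Real.sqrt_le_sqrt h
    _ = ∑ i, ‖x i‖ := Real.sqrt_sq (Finset.sum_nonneg fun _ _ => norm_nonneg _)
    _ = norm1 x := by simp [norm1, Real.norm_eq_abs]

lemma abs_apply_le_norm {n : ℕ} (x : EuclideanSpace ℝ (Fin n)) (i : Fin n) :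
    |x i| ≤ ‖x‖ := by
  rw [EuclideanSpace.norm_eq]
  have : |x i| = Real.sqrt (‖x i‖ ^ 2) := by
    rw [Real.sqrt_sq (norm_nonneg _), Real.norm_eq_abs]
  rw [this]
  exact Real.sqrt_le_sqrt (Finset.single_le_sum (f := fun j => ‖x j‖ ^ 2)
    (fun _ _ => sq_nonneg _) (Finset.mem_univ i))

lemma norm1_le_card_norm {n : ℕ} (x : EuclideanSpace ℝ (Fin n)) :
    norm1 x ≤ n * ‖x‖ := by
  calc norm1 x = ∑ _i : Fin n, |x _i| := rfl
    _ ≤ ∑ _i : Fin n, ‖x‖ := Finset.sum_le_sum fun i _ => abs_apply_le_norm x i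
    _ = n * ‖x‖ := by simp [mul_comm]

lemma norm1_smul {n : ℕ} (t : ℝ) (x : EuclideanSpace ℝ (Fin n)) :
    norm1 (t • x) = |t| * norm1 x := by
  simp [norm1, abs_mul, Finset.mul_sum]

lemma norm1_sub_le {n : ℕ} (x z : EuclideanSpace ℝ (Fin n)) :
    norm1 x ≤ norm1 z + norm1 (x - z) := by
  rw [norm1, norm1, norm1, ← Finset.sum_add_distrib]
  apply Finset.sum_le_sum
  intro i _
  have : (x - z) i = x i - z i := rfl
  rw [this]
  calc |x i| = |z i + (x i - z i)| := by ring_nf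
    _ ≤ |z i| + |x i - z i| := abs_add_le _ _

/-- The sequence (‖x^k‖₁) generated by BP-MAP converges to r̄. -/
theorem bpmap_norm1_x_tendsto {n m : ℕ} (hn : 1 ≤ n)
    (A : Matrix (Fin m) (Fin n) ℝ) (b : Fin m → ℝ)
    (M : Set (EuclideanSpace ℝ (Fin n)))
    (hM : M = {x | A.mulVec (WithLp.ofLp x) = b})
    (hMne : M.Nonempty)
    (rbar : ℝ) (hrbar : rbar = sInf (norm1 '' M))
    (r : ℕ → ℝ) (z x : ℕ → EuclideanSpace ℝ (Fin n))
    (hr0 : r 0 = 0) (hz0 : z 0 = 0)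
    (hxM : ∀ k, x k ∈ M)
    (hzB : ∀ k, norm1 (z k) ≤ r k)
    (hbap : ∀ k, ∀ y ∈ M, ∀ w : EuclideanSpace ℝ (Fin n),
      norm1 w ≤ r k → dist (z k) (x k) ≤ dist w y)
    (hrrec : ∀ k, r (k + 1) = r k + dist (z k) (x k)) :
    Tendsto (fun k => norm1 (x k)) atTop (𝓝 rbar) := by
  have himne : (norm1 '' M).Nonempty := hMne.image _
  have hbdd : BddBelow (norm1 '' M) :=
    ⟨0, fun v ⟨y, _, hy⟩ => hy ▸ norm1_nonneg y⟩
  -- rbar is a lower bound for norm1 on M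
  have hrbar_le : ∀ y ∈ M, rbar ≤ norm1 y := fun y hy =>
    hrbar ▸ csInf_le hbdd ⟨y, hy, rfl⟩
  have hrbar_nonneg : 0 ≤ rbar := by
    obtain ⟨y, hy⟩ := hMne
    -- need rbar ≥ 0 : rbar = sInf which is ≥ 0 as 0 is lower bound
    rw [hrbar]
    exact le_csInf himne fun v ⟨w, _, hw⟩ => hw ▸ norm1_nonneg w
  -- d k nonneg
  set d : ℕ → ℝ := fun k => dist (z k) (x k) with hd
  have hdnn : ∀ k, 0 ≤ d k := fun k => dist_nonneg
  -- key: if 0 ≤ r k ≤ rbar then r k + d k ≤ rbar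
  have hkey : ∀ k, 0 ≤ r k → r k ≤ rbar → r k + d k ≤ rbar := by
    intro k hk0 hkr
    have hdle : ∀ y ∈ M, d k ≤ norm1 y - r k := by
      intro y hy
      have hny : rbar ≤ norm1 y := hrbar_le y hy
      by_cases hy0 : norm1 y = 0
      · -- then y = 0 and r k = 0
        have hyz : y = 0 := by
          have : ‖y‖ ≤ 0 := hy0 ▸ norm_le_norm1 y
          exact norm_le_zero_iff.mp this
        have hrk0 : r k = 0 := le_antisymm (by linarith) hk0
        have h0 := hbap k y hy 0 (by simp [norm1, hrk0])
        have hz0' : dist (0 : EuclideanSpace ℝ (Fin n)) y = 0 := by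
          rw [hyz]; simp
        rw [hy0, hrk0]
        calc d k ≤ dist (0 : EuclideanSpace ℝ (Fin n)) y := h0
          _ = 0 - 0 := by rw [hz0']; ring
      · have hy0' : 0 < norm1 y := lt_of_le_of_ne (norm1_nonneg y) (Ne.symm hy0)
        set t := r k / norm1 y with ht
        have ht0 : 0 ≤ t := div_nonneg hk0 hy0'.le
        have ht1 : t ≤ 1 := (div_le_one hy0').mpr (le_trans hkr hny)
        have hw : norm1 (t • y) ≤ r k := by
          rw [norm1_smul, abs_of_nonneg ht0, ht, div_mul_cancel₀]
          exact hy0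
        have := hbap k y hy (t • y) hw
        have hdist : dist (t • y) y = (1 - t) * ‖y‖ := by
          rw [dist_eq_norm]
          have : t • y - y = -((1 - t) • y) := by
            simp [sub_smul, one_smul]
          rw [this, norm_neg, norm_smul, Real.norm_eq_abs,
            abs_of_nonneg (by linarith)]
        have hyn : ‖y‖ ≤ norm1 y := norm_le_norm1 y
        have : d k ≤ (1 - t) * ‖y‖ := hdist ▸ this
        have h2 : (1 - t) * ‖y‖ ≤ (1 - t) * norm1 y :=
          mul_le_mul_of_nonneg_left hyn (by linarith)
        have h3 : (1 - t) * norm1 y = norm1 y - r k := by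
          rw [ht, sub_mul, one_mul, div_mul_cancel₀ _ hy0]
        linarith
    have : d k + r k ≤ rbar := by
      rw [hrbar]
      apply le_csInf himne
      rintro v ⟨y, hy, rfl⟩
      have := hdle y hy
      linarith
    linarith
  -- r k monotone, nonneg, ≤ rbar
  have hrprop : ∀ k, 0 ≤ r k ∧ r k ≤ rbar := by
    intro k
    induction k with
    | zero => exact ⟨hr0.ge, hr0 ▸ hrbar_nonneg⟩
    | succ k ih =>
      have := hkey k ih.1 ih.2
      constructor
      · rw [hrrec k]; have := hdnn k; linarith [ih.1]
      · rw [hrrec k]; exact this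
  have hmono : Monotone r := monotone_nat_of_le_succ fun k => by
    rw [hrrec k]; linarith [hdnn k]
  have hbddr : BddAbove (Set.range r) := ⟨rbar, by rintro v ⟨k, rfl⟩; exact (hrprop k).2⟩
  -- r converges
  have hrconv : Tendsto r atTop (𝓝 (⨆ k, r k)) := tendsto_atTop_ciSup hmono hbddr
  have hrconv' : Tendsto (fun k => r (k + 1)) atTop (𝓝 (⨆ k, r k)) :=
    hrconv.comp (tendsto_add_atTop_nat 1)
  have hdconv : Tendsto d atTop (𝓝 0) := by
    have h : Tendsto (fun k => r (k + 1) - r k) atTop (𝓝 0) := by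
      simpa using hrconv'.sub hrconv
    refine h.congr fun k => ?_
    rw [hrrec k]; ring
  -- squeeze
  have hupper : ∀ k, norm1 (x k) ≤ rbar + n * d k := by
    intro k
    have h1 : norm1 (x k) ≤ norm1 (z k) + norm1 (x k - z k) := norm1_sub_le _ _
    have h2 : norm1 (x k - z k) ≤ n * ‖x k - z k‖ := norm1_le_card_norm _
    have h3 : ‖x k - z k‖ = d k := by
      show _ = dist (z k) (x k); rw [dist_comm, dist_eq_norm]
    have h4 := hzB k
    have h5 := (hrprop k).2
    have hn0 : (0:ℝ) ≤ n := Nat.cast_nonneg n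
    nlinarith [hdnn k]
  have hlower : ∀ k, rbar ≤ norm1 (x k) := fun k => hrbar_le _ (hxM k)
  have hub : Tendsto (fun k => rbar + (n : ℝ) * d k) atTop (𝓝 rbar) := by
    have : Tendsto (fun k => rbar + (n : ℝ) * d k) atTop (𝓝 (rbar + n * 0)) :=
      tendsto_const_nhds.add (tendsto_const_nhds.mul hdconv)
    simpa using this
  exact tendsto_of_tendsto_of_tendsto_of_le_of_le tendsto_const_nhds hub hlower hupper
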